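/- For any protocol state X on a domain channel which is an input state with flow role (a nonempty coproduct state of role +), there is a finite sequence of legal input events from X ending at a state which is atomic, is an output (product) state, or has sink role; dually, for any protocol state on a codomain channel which is an input (product) state with flow role, there is a finite sequence of legal input events ending at a state which is atomic, is an output state, or has sink role. -/

import Mathlib

/-!
STATEMENT 5: every input protocol state with flow role can be driven, by a
finite sequence of legal input events, into a state which is atomic, an
output state, or has sink role (on a domain channel, and dually on a codomain
channel).
-/

namespace Stmt5

/-- Protocols over a set of atoms `At`: atoms, coproducts and products of
finite families (events are represented by positions in the list). -/
inductive Proto (At : Type) : Type where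
  | atom : At → Proto At
  | sum : List (Proto At) → Proto At
  | prod : List (Proto At) → Proto At

/-- The three roles a protocol state may have. -/
inductive Role : Type where
  | src  -- source role 0
  | snk  -- sink role 1
  | flow -- flow role +
deriving DecidableEq

/-- Interchanging the source and sink roles. -/
def Role.swap : Role → Role
  | .src => .snk
  | .snk => .src
  | .flow => .flow

/-- The role of a coproduct state, from the roles of its components. -/
def sumRole (rs : List Role) : Role :=
  if ∀ r ∈ rs, r = Role.src then .src
  else if rs.count Role.snk = 1 ∧ rs.count Role.flow = 0 then .snk
  else .flow

/-- The role of a product state, from the roles of its components. -/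
def prodRole (rs : List Role) : Role :=
  if ∀ r ∈ rs, r = Role.snk then .snk
  else if rs.count Role.src = 1 ∧ rs.count Role.flow = 0 then .src
  else .flow

mutual
/-- The role of a protocol state on a domain channel. -/
def roleD {At : Type} : Proto At → Role
  | .atom _ => .flow
  | .sum Xs => sumRole (rolesD Xs)
  | .prod Xs => prodRole (rolesD Xs)

def rolesD {At : Type} : List (Proto At) → List Role
  | [] => []
  | X :: Xs => roleD X :: rolesD Xs
end

/-- A channel is either a domain channel or a codomain channel. -/
inductive Side : Type where
  | dom
  | cod
deriving DecidableEq

/-- The role of a protocol state on a channel of the given side (codomain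
roles are computed dually). -/
def role {At : Type} : Side → Proto At → Role
  | .dom, X => roleD X
  | .cod, X => (roleD X).swap

/-- Directions of events: input or output. -/
inductive Dir : Type where
  | inp
  | out
deriving DecidableEq

def Dir.flip : Dir → Dir
  | .inp => .out
  | .out => .inp

/-- An event: a direction together with the position of the selected
component. -/
abbrev Ev : Type := Dir × ℕ

/-- The subprotocol reached by a transition along event `i`. -/
def Proto.next {At : Type} : Proto At → ℕ → Option (Proto At)
  | .atom _, _ => none
  | .sum Xs, i => Xs[i]?
  | .prod Xs, i => Xs[i]?

/-- The direction of events a protocol state expects, on a channel of the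
given side (coproducts expect inputs on domain channels and outputs on
codomain channels; products dually). -/
def expects {At : Type} (s : Side) : Proto At → Option Dir
  | .sum _ => some (match s with | .dom => .inp | .cod => .out)
  | .prod _ => some (match s with | .dom => .out | .cod => .inp)
  | .atom _ => none

/-- A legal transition of a protocol state on a channel of side `s`: it starts
at a state with flow role, has the direction the state expects, and an output
transition does not end at a sink-role state while an input transition does
not end at a source-role state. -/
def StepP {At : Type} (s : Side) (P : Proto At) (e : Ev) (P' : Proto At) : Prop :=
  role s P = .flow ∧ expects s P = some e.1 ∧ P.next e.2 = some P' ∧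
    (e.1 = Dir.out → role s P' ≠ .snk) ∧ (e.1 = Dir.inp → role s P' ≠ .src)

/-- A legal channel behaviour: a finite sequence of legal transitions,
reaching the indicated state. -/
inductive StepsP {At : Type} (s : Side) : Proto At → List Ev → Proto At → Prop where
  | nil (P : Proto At) : StepsP s P [] P
  | cons {P P' P'' : Proto At} {e : Ev} {l : List Ev} :
      StepP s P e P' → StepsP s P' l P'' → StepsP s P (e :: l) P''

def Proto.IsAtom {At : Type} : Proto At → Prop
  | .atom _ => True
  | _ => False

/-- A finite family of channels, each assigned a protocol and partitioned
into domain channels and codomain channels. -/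
structure Setting (At Chan : Type) where
  active : Set Chan
  finite : active.Finite
  side : Chan → Side
  proto : Chan → Proto At

/-- A behaviour: a tuple of channel behaviours, one per channel. -/
abbrev Behav (Chan : Type) : Type := Chan → List Ev

variable {At Chan M : Type}

/-- The behaviour `p` reaches the frontier state `P` on channel `c`. -/
def Setting.Reaches (S : Setting At Chan) (p : Behav Chan) (c : Chan) (P : Proto At) : Prop :=
  StepsP (S.side c) (S.proto c) (p c) P

/-- `p` is a legal behaviour for the setting `S`. -/
def Setting.IsBehav (S : Setting At Chan) (p : Behav Chan) : Prop :=
  (∀ c ∉ S.active, p c = []) ∧ ∀ c ∈ S.active, ∃ P, S.Reaches p c P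

/-- An antecedent behaviour: every frontier state has flow or sink role. -/
def Setting.Antecedent (S : Setting At Chan) (p : Behav Chan) : Prop :=
  S.IsBehav p ∧ ∀ c ∈ S.active, ∀ P, S.Reaches p c P → role (S.side c) P ≠ .src

/-- A saturated behaviour: every frontier state is atomic, has sink role,
or is an output state with flow role. -/
def Setting.Saturated (S : Setting At Chan) (p : Behav Chan) : Prop :=
  S.IsBehav p ∧ ∀ c ∈ S.active, ∀ P, S.Reaches p c P →
    P.IsAtom ∨ role (S.side c) P = .snk ∨
      (expects (S.side c) P = some Dir.out ∧ role (S.side c) P = .flow)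

/-- `p ⊑ q`: componentwise prefix of behaviours. -/
def BPrefix (p q : Behav Chan) : Prop := ∀ c, p c <+: q c

/-- `p ⊑_i q`: `p` is a prefix of `q` and all intervening events are inputs. -/
def BPrefixI (p q : Behav Chan) : Prop :=
  ∀ c, ∃ r : List Ev, q c = p c ++ r ∧ ∀ e ∈ r, e.1 = Dir.inp

/-- Compatibility `p ⌣ q` of behaviours. -/
def Compat (p q : Behav Chan) : Prop := ∀ c, p c <+: q c ∨ q c <+: p c

/-- The join `p ⊔ q` of (compatible) behaviours: the longer component on each
channel. -/
def bjoin (p q : Behav Chan) : Behav Chan :=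
  fun c => if (p c).length ≤ (q c).length then q c else p c

/-- The empty behaviour. -/
def emptyB : Behav Chan := fun _ => []

/-- `p * e` on channel `c`: append the event `e` at the end of the channel
behaviour of `c`. -/
def bapp [DecidableEq Chan] (p : Behav Chan) (c : Chan) (e : Ev) : Behav Chan :=
  Function.update p c (p c ++ [e])

/-- `e * p` on channel `c`: prepend the event `e` at the beginning of the
channel behaviour of `c`. -/
def bpre [DecidableEq Chan] (c : Chan) (e : Ev) (p : Behav Chan) : Behav Chan :=
  Function.update p c (e :: p c)

/-- The conclusion of an entailment: an output event `ᾱ[a]` or an atomic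
morphism. -/
inductive Concl (Chan M : Type) : Type where
  | out : Chan → ℕ → Concl Chan M
  | mor : M → Concl Chan M

/-- An entailment: an antecedent behaviour together with a conclusion. -/
abbrev Ent (Chan M : Type) : Type := Behav Chan × Concl Chan M

/-- The event `e` is a legal next event on channel `c` given the behaviour
`p`. -/
def Setting.CanStep (S : Setting At Chan) (p : Behav Chan) (c : Chan) (e : Ev) : Prop :=
  ∃ P P', S.Reaches p c P ∧ StepP (S.side c) P e P'

/-- Validity of an entailment: the antecedent is an antecedent behaviour and
the conclusion is a legal output event, resp. an atomic morphism on the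
(all-atomic) frontier. -/
def Setting.ValidEnt (S : Setting At Chan) : Ent Chan M → Prop
  | (p, .out α a) => S.Antecedent p ∧ α ∈ S.active ∧ S.CanStep p α (Dir.out, a)
  | (p, .mor _) => S.Antecedent p ∧ ∀ c ∈ S.active, ∃ A, S.Reaches p c (.atom A)

/-- A set of entailments. -/
def EntSet (S : Setting At Chan) (Q : Set (Ent Chan M)) : Prop :=
  ∀ e ∈ Q, S.ValidEnt e

/-- All output events occurring in `p` are `Q`-justified. -/
def Justified [DecidableEq Chan] (S : Setting At Chan) (Q : Set (Ent Chan M))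
    (p : Behav Chan) : Prop :=
  ∀ c ∈ S.active, ∀ (l : List Ev) (a : ℕ) (r : List Ev), p c = l ++ (Dir.out, a) :: r →
    ∃ u : Behav Chan, (u, Concl.out c a) ∈ Q ∧ u c = l ∧ BPrefix (bapp u c (Dir.out, a)) p

/-- A `Q`-preantecedent: a `Q`-justified antecedent behaviour. -/
def Preant [DecidableEq Chan] (S : Setting At Chan) (Q : Set (Ent Chan M))
    (p : Behav Chan) : Prop :=
  S.Antecedent p ∧ Justified S Q p

/-- A `Q`-antecedent: the antecedent of some entailment of `Q`. -/
def QAnt (Q : Set (Ent Chan M)) (p : Behav Chan) : Prop := ∃ x, (p, x) ∈ Q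

section EP

variable [DecidableEq Chan]

/-- EP-1: every `Q`-antecedent is `Q`-justified. -/
def EP1 (S : Setting At Chan) (Q : Set (Ent Chan M)) : Prop :=
  ∀ p, QAnt Q p → Justified S Q p

/-- EP-2: compatible entailments with equal channel behaviour on the output
channel conclude the same output event. -/
def EP2 (Q : Set (Ent Chan M)) : Prop :=
  ∀ (p q : Behav Chan) (α : Chan) (a b : ℕ),
    (p, Concl.out α a) ∈ Q → (q, Concl.out α b) ∈ Q → p α = q α → Compat p q → a = b

/-- EP-3: between a preantecedent and a saturated preantecedent above it along
inputs there is a `Q`-antecedent. -/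
def EP3 (S : Setting At Chan) (Q : Set (Ent Chan M)) : Prop :=
  ∀ p q, Preant S Q p → Preant S Q q → S.Saturated q → BPrefixI p q →
    ∃ p', QAnt Q p' ∧ BPrefixI p p' ∧ BPrefixI p' q

/-- EP-4. -/
def EP4 (Q : Set (Ent Chan M)) : Prop :=
  ∀ (α β : Chan) (a b : ℕ) (p q : Behav Chan), α ≠ β →
    (p, Concl.out α a) ∈ Q → (q, Concl.out β b) ∈ Q → p α = q α → BPrefix p q →
    (bapp q α (Dir.out, a), Concl.out β b) ∈ Q

/-- EP-5. -/
def EP5 (S : Setting At Chan) (Q : Set (Ent Chan M)) : Prop :=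
  ∀ (α β : Chan) (a b : ℕ) (p : Behav Chan), α ≠ β →
    (p, Concl.out α a) ∈ Q → β ∈ S.active → S.CanStep p β (Dir.inp, b) →
    (bapp p β (Dir.inp, b), Concl.out α a) ∈ Q

/-- EP-6. -/
def EP6 (Q : Set (Ent Chan M)) : Prop :=
  ∀ (α β : Chan) (a b : ℕ) (p : Behav Chan), α ≠ β →
    (bapp p β (Dir.out, b), Concl.out α a) ∈ Q → (p, Concl.out α a) ∈ Q

/-- EP-7. -/
def EP7 (S : Setting At Chan) (Q : Set (Ent Chan M)) : Prop :=
  ∀ (α β : Chan) (a : ℕ) (p : Behav Chan), α ≠ β → Preant S Q p → β ∈ S.active →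
    (∃ b, S.CanStep p β (Dir.inp, b)) →
    (∀ b, S.CanStep p β (Dir.inp, b) → (bapp p β (Dir.inp, b), Concl.out α a) ∈ Q) →
    (p, Concl.out α a) ∈ Q

/-- A proto-process: a set of entailments satisfying EP-1, EP-2 and EP-3. -/
def ProtoProcess (S : Setting At Chan) (Q : Set (Ent Chan M)) : Prop :=
  EntSet S Q ∧ EP1 S Q ∧ EP2 Q ∧ EP3 S Q

/-- An extensional process: a set of entailments satisfying EP-1 – EP-7. -/
def ExtProcess (S : Setting At Chan) (Q : Set (Ent Chan M)) : Prop :=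
  ProtoProcess S Q ∧ EP4 Q ∧ EP5 S Q ∧ EP6 Q ∧ EP7 S Q

end EP

/-! A flow-role input state cannot have only source components (on a codomain channel: only
components of domain role sink), so some input event is legal and leads to a state that is not a
source. Repeating this descends through ever smaller subprotocols and can only stop at an atom,
an output state or a sink. -/

lemma rolesD_eq_map {At : Type} (Xs : List (Proto At)) : rolesD Xs = Xs.map roleD := by
  induction Xs with
  | nil => rfl
  | cons X Xs ih => simp [rolesD, ih]

lemma exists_ne_src_of_sumRole_eq_flow {rs : List Role} (h : sumRole rs = .flow) :
    ∃ r ∈ rs, r ≠ .src := by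
  by_contra! hall
  rw [sumRole, if_pos hall] at h
  cases h

lemma exists_ne_snk_of_prodRole_eq_flow {rs : List Role} (h : prodRole rs = .flow) :
    ∃ r ∈ rs, r ≠ .snk := by
  by_contra! hall
  rw [prodRole, if_pos hall] at h
  cases h

lemma Role.swap_eq_flow {r : Role} (h : r.swap = .flow) : r = .flow := by
  cases r <;> simp_all [Role.swap]

lemma Role.swap_ne_src {r : Role} (h : r ≠ .snk) : r.swap ≠ .src := by
  cases r <;> simp_all [Role.swap]

def Proto.components {At : Type} : Proto At → List (Proto At)
  | .atom _ => []
  | .sum Xs => Xs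
  | .prod Xs => Xs

lemma Proto.next_eq_getElem?_components {At : Type} (X : Proto At) (i : ℕ) :
    X.next i = X.components[i]? := by
  cases X <;> rfl

lemma Proto.sizeOf_lt_of_mem_components {At : Type} {X Y : Proto At}
    (h : Y ∈ X.components) : sizeOf Y < sizeOf X := by
  have := List.sizeOf_lt_of_mem h
  cases X <;> simp_all [Proto.components] <;> omega

lemma Proto.isAtom_of_expects_eq_none {At : Type} {s : Side} {X : Proto At}
    (h : expects s X = none) : X.IsAtom := by
  cases X <;> simp_all [expects, Proto.IsAtom]

lemma exists_mem_components_role_ne_src {At : Type} {s : Side} {X : Proto At}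
    (hflow : role s X = .flow) (hinp : expects s X = some .inp) :
    ∃ Y ∈ X.components, role s Y ≠ .src := by
  match s, X with
  | .dom, .sum Xs =>
    obtain ⟨r, hr, hne⟩ := exists_ne_src_of_sumRole_eq_flow (rs := rolesD Xs) hflow
    rw [rolesD_eq_map, List.mem_map] at hr
    obtain ⟨Y, hY, rfl⟩ := hr
    exact ⟨Y, hY, hne⟩
  | .cod, .prod Xs =>
    obtain ⟨r, hr, hne⟩ :=
      exists_ne_snk_of_prodRole_eq_flow (rs := rolesD Xs) (Role.swap_eq_flow hflow)
    rw [rolesD_eq_map, List.mem_map] at hr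
    obtain ⟨Y, hY, rfl⟩ := hr
    exact ⟨Y, hY, Role.swap_ne_src hne⟩
  | .dom, .prod _ | .cod, .sum _ | _, .atom _ => simp [expects] at hinp

lemma exists_inputStep_of_role_eq_flow {At : Type} {s : Side} {X : Proto At}
    (hflow : role s X = .flow) (hinp : expects s X = some .inp) :
    ∃ i, ∃ Y ∈ X.components, StepP s X (.inp, i) Y := by
  obtain ⟨Y, hY, hYsrc⟩ := exists_mem_components_role_ne_src hflow hinp
  obtain ⟨i, hi⟩ := List.mem_iff_getElem?.mp hY
  exact ⟨i, Y, hY, hflow, hinp, (X.next_eq_getElem?_components i).trans hi, by simp,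
    fun _ => hYsrc⟩

theorem exists_inputSteps_of_role_ne_src {At : Type} (s : Side) (X : Proto At)
    (hX : role s X ≠ .src) :
    ∃ (l : List Ev) (Y : Proto At), StepsP s X l Y ∧ (∀ e ∈ l, e.1 = Dir.inp) ∧
      (Y.IsAtom ∨ expects s Y = some Dir.out ∨ role s Y = Role.snk) := by
  match hrole : role s X, hexp : expects s X with
  | .src, _ => exact absurd hrole hX
  | .snk, _ => exact ⟨[], X, .nil X, by simp, .inr (.inr hrole)⟩
  | .flow, none => exact ⟨[], X, .nil X, by simp, .inl (Proto.isAtom_of_expects_eq_none hexp)⟩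
  | .flow, some .out => exact ⟨[], X, .nil X, by simp, .inr (.inl hexp)⟩
  | .flow, some .inp =>
    obtain ⟨i, Y, hY, hstep⟩ := exists_inputStep_of_role_eq_flow hrole hexp
    have := Proto.sizeOf_lt_of_mem_components hY
    obtain ⟨l, Z, hsteps, hl, hZ⟩ := exists_inputSteps_of_role_ne_src s Y (hstep.2.2.2.2 rfl)
    exact ⟨(Dir.inp, i) :: l, Z, .cons hstep hsteps, by simpa using hl, hZ⟩
termination_by sizeOf X

theorem input_flow_drives_to_saturated {At : Type} :
    (∀ Xs : List (Proto At), Xs ≠ [] → role Side.dom (Proto.sum Xs) = Role.flow →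
      ∃ (l : List Ev) (Y : Proto At),
        StepsP Side.dom (Proto.sum Xs) l Y ∧ (∀ e ∈ l, e.1 = Dir.inp) ∧
        (Y.IsAtom ∨ expects Side.dom Y = some Dir.out ∨ role Side.dom Y = Role.snk)) ∧
    (∀ Xs : List (Proto At), role Side.cod (Proto.prod Xs) = Role.flow →
      ∃ (l : List Ev) (Y : Proto At),
        StepsP Side.cod (Proto.prod Xs) l Y ∧ (∀ e ∈ l, e.1 = Dir.inp) ∧
        (Y.IsAtom ∨ expects Side.cod Y = some Dir.out ∨ role Side.cod Y = Role.snk)) :=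
  ⟨fun Xs _ h => exists_inputSteps_of_role_ne_src .dom (.sum Xs) (by simp [h]),
    fun Xs h => exists_inputSteps_of_role_ne_src .cod (.prod Xs) (by simp [h])⟩

end Stmt5
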